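/- arXiv:1612.08326 — 2 statements merged into one kernel-verified Lean document; each statement's English description precedes it below -/
import Mathlib

section
/- Let L > 0, T > 0 and n ≥ 1. Over all μ_1, …, μ_n > 0 with Σ_{i=1}^n μ_i = T, the sum Σ_{i=1}^n μ_i·(e^{L/μ_i} − 1) is minimized at μ_1 = … = μ_n = T/n, with minimum value T·(e^{nL/T} − 1). Equivalently, when n real-time users fill the whole slot, the optimal per-user power is P_i = e^{nL/T} − 1 for every i. (This is the equal-power allocation of Theorem 1, equation (19), for the case where the Lambert policy does not fit in the slot.) -/
/-!
The function `μ ↦ μ (e^{L/μ} - 1)` is convex on `(0, ∞)`, being the perspective of `x ↦ e^x - 1`.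
Concretely, the tangent line of `exp` at `a = nL/T` gives `μ e^{L/μ} ≥ e^a ((1 - a) μ + L)` for
every `μ > 0`, and summing this over a split of `T` into `n` parts makes the right-hand side
`T e^a`, which is the value attained by the equal split.
-/

open Finset Real

theorem Real.exp_mul_sub_add_one_le_exp (a t : ℝ) : exp a * (t - a + 1) ≤ exp t :=
  calc exp a * (t - a + 1) ≤ exp a * exp (t - a) :=
        mul_le_mul_of_nonneg_left (add_one_le_exp _) (exp_pos a).le
    _ = exp t := by rw [← exp_add, add_sub_cancel]

theorem Real.exp_mul_tangent_le_mul_exp_div (a L : ℝ) {μ : ℝ} (hμ : 0 < μ) :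
    exp a * ((1 - a) * μ + L) ≤ μ * exp (L / μ) :=
  calc exp a * ((1 - a) * μ + L) = μ * (exp a * (L / μ - a + 1)) := by
        field_simp
        ring
    _ ≤ μ * exp (L / μ) :=
        mul_le_mul_of_nonneg_left (exp_mul_sub_add_one_le_exp a _) hμ.le

theorem Real.sum_mul_exp_card_mul_div_sum_le {ι : Type*} [Fintype ι] (L : ℝ) (μ : ι → ℝ)
    (hμ : ∀ i, 0 < μ i) :
    (∑ i, μ i) * exp (Fintype.card ι * L / ∑ i, μ i) ≤ ∑ i, μ i * exp (L / μ i) := by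
  rcases isEmpty_or_nonempty ι with hι | hι
  · simp
  set T := ∑ i, μ i
  set a := Fintype.card ι * L / T
  have hT : 0 < T := Finset.sum_pos (fun i _ ↦ hμ i) univ_nonempty
  calc T * exp a = ∑ i, exp a * ((1 - a) * μ i + L) := by
        rw [← mul_sum, sum_add_distrib, ← mul_sum, sum_const, card_univ, nsmul_eq_mul]
        simp only [a]
        field_simp
        ring
    _ ≤ ∑ i, μ i * exp (L / μ i) :=
        sum_le_sum fun i _ ↦ exp_mul_tangent_le_mul_exp_div a L (hμ i)

theorem equal_split_minimizes_energy_general (L T : ℝ) (n : ℕ) :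
    (∀ μ : Fin n → ℝ, (∀ i, 0 < μ i) → ∑ i, μ i = T →
        T * (Real.exp ((n : ℝ) * L / T) - 1) ≤ ∑ i, μ i * (Real.exp (L / μ i) - 1)) ∧
      ∑ _i : Fin n, (T / (n : ℝ)) * (Real.exp (L / (T / (n : ℝ))) - 1)
        = T * (Real.exp ((n : ℝ) * L / T) - 1) := by
  constructor
  · rintro μ hμ rfl
    have h := sum_mul_exp_card_mul_div_sum_le L μ hμ
    rw [Fintype.card_fin] at h
    simp only [mul_sub, mul_one, sum_sub_distrib]
    linarith
  · rw [sum_const, card_univ, Fintype.card_fin, nsmul_eq_mul, div_div_eq_mul_div]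
    rcases eq_or_ne n 0 with rfl | hn
    · simp
    · field_simp

/-- equal time split minimizes total energy when `n` real-time
users fill the slot, giving per-user power `e^{nL/T} − 1`. -/
theorem equal_split_minimizes_energy (L T : ℝ) (n : ℕ) (hL : 0 < L) (hT : 0 < T)
    (hn : 1 ≤ n) :
    (∀ μ : Fin n → ℝ, (∀ i, 0 < μ i) → ∑ i, μ i = T →
        T * (Real.exp ((n : ℝ) * L / T) - 1) ≤ ∑ i, μ i * (Real.exp (L / μ i) - 1)) ∧
      ∑ _i : Fin n, (T / (n : ℝ)) * (Real.exp (L / (T / (n : ℝ))) - 1)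
        = T * (Real.exp ((n : ℝ) * L / T) - 1) :=
  equal_split_minimizes_energy_general L T n
end

section
/- Let N ≥ 1, let Y : {1, …, N} → ℝ satisfy Y(1) ≥ Y(2) ≥ … ≥ Y(N), and let X > 0, T > 0, L > 0. For S ⊆ {1, …, N} define F(S) = Σ_{i∈S} Y(i) − X·T·(e^{|S|·L/T} − 1). Then the set S* = { i : Y(i) > X·T·(e^{i·L/T} − e^{(i−1)·L/T}) } is a prefix {1, …, n*} of the sorted order and maximizes F over all subsets S ⊆ {1, …, N}. (This is the scheduling rule of equation (24) in Theorem 2 for the case where only real-time users are scheduled.) -/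
/-!
The energy `X·T·(e^{nL/T} − 1)` of serving `n` packets telescopes into the marginal costs
`c i = X·T·(e^{iL/T} − e^{(i−1)L/T})`, which increase with `i`. Since the energy depends only on
`|S|` and `Y` is decreasing, replacing `S` by the prefix `{1, …, |S|}` does not decrease the
objective, and the objective of a prefix is the sum of the marginal gains `Y i − c i`. These gains
decrease, so the indices with positive gain form a prefix, and summing exactly the positive gains
is optimal.
-/

/-- Objective when only real-time users are scheduled: reward minus the energy
`X·T·(e^{|S|L/T} − 1)` needed to serve `|S|` packets in the whole slot. -/
noncomputable def rtOnlyObj (X T L : ℝ) (Y : ℕ → ℝ) (S : Finset ℕ) : ℝ :=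
  (∑ i ∈ S, Y i) - X * T * (Real.exp ((S.card : ℝ) * L / T) - 1)

/-- The threshold set `{ i : Y i > X·T·(e^{iL/T} − e^{(i−1)L/T}) }`. -/
noncomputable def rtOnlySet (N : ℕ) (X T L : ℝ) (Y : ℕ → ℝ) : Finset ℕ :=
  (Finset.Icc 1 N).filter
    (fun i => X * T * (Real.exp ((i : ℝ) * L / T) - Real.exp (((i : ℝ) - 1) * L / T)) < Y i)

open Finset

lemma exists_filter_Icc_eq_Icc (p : ℕ → Prop) [DecidablePred p] (N : ℕ)
    (hp : ∀ i j, 1 ≤ i → i ≤ j → j ≤ N → p j → p i) :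
    ∃ n ≤ N, (Icc 1 N).filter p = Icc 1 n := by
  induction N with
  | zero => exact ⟨0, le_rfl, by simp⟩
  | succ N ih =>
    rw [← insert_Icc_right_eq_Icc_add_one (by omega), filter_insert]
    by_cases hN : p (N + 1)
    · refine ⟨N + 1, le_rfl, ?_⟩
      rw [if_pos hN, filter_true_of_mem fun i hi => ?_, insert_Icc_right_eq_Icc_add_one (by omega)]
      rw [mem_Icc] at hi
      exact hp i (N + 1) hi.1 (by omega) le_rfl hN
    · obtain ⟨n, hnN, hn⟩ := ih fun i j hi hij hjN => hp i j hi hij (by omega)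
      exact ⟨n, by omega, by rw [if_neg hN, hn]⟩

section

variable {M : Type*} [AddCommMonoid M] [PartialOrder M] [IsOrderedAddMonoid M]

lemma sum_le_sum_Icc_card {N : ℕ} {Y : ℕ → M} (hY : AntitoneOn Y (Set.Icc 1 N))
    {S : Finset ℕ} (hS : S ⊆ Icc 1 N) : ∑ i ∈ S, Y i ≤ ∑ i ∈ Icc 1 #S, Y i := by
  induction S using Finset.induction_on_max with
  | empty => simp
  | insert a s ha ih =>
    have has : a ∉ s := fun h => lt_irrefl a (ha a h)
    have haN : a ∈ Icc 1 N := hS (mem_insert_self a s)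
    have hsN : s ⊆ Icc 1 N := (subset_insert a s).trans hS
    have hcard : #s + 1 ≤ a := by
      have hs : s ⊆ Ico 1 a := fun x hx => mem_Ico.2 ⟨(mem_Icc.1 (hsN hx)).1, ha x hx⟩
      have := card_le_card hs
      rw [Nat.card_Ico] at this
      rw [mem_Icc] at haN
      omega
    rw [sum_insert has, card_insert_of_notMem has, sum_Icc_succ_top (by omega), add_comm]
    refine add_le_add (ih hsN) (hY ?_ ?_ hcard)
    · simp only [Set.mem_Icc, mem_Icc] at haN ⊢
      omega
    · simpa using haN

lemma sum_le_sum_filter_of_nonneg_of_nonpos {ι : Type*} {s t : Finset ι} {g : ι → M}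
    (p : ι → Prop) [DecidablePred p] (hst : s ⊆ t) (hpos : ∀ i ∈ t, p i → 0 ≤ g i)
    (hneg : ∀ i ∈ t, ¬ p i → g i ≤ 0) :
    ∑ i ∈ s, g i ≤ ∑ i ∈ t.filter p, g i := by
  rw [← sum_filter_add_sum_filter_not s p]
  calc ∑ i ∈ s.filter p, g i + ∑ i ∈ s.filter (¬ p ·), g i
      ≤ ∑ i ∈ s.filter p, g i + 0 := by
        gcongr
        exact sum_nonpos fun i hi => hneg i (hst (mem_filter.1 hi).1) (mem_filter.1 hi).2
    _ ≤ ∑ i ∈ t.filter p, g i := by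
        rw [add_zero]
        exact sum_le_sum_of_subset_of_nonneg (filter_subset_filter p hst)
          fun i hi _ => hpos i (mem_filter.1 hi).1 (mem_filter.1 hi).2

end

noncomputable def rtCost (X T L : ℝ) (i : ℕ) : ℝ :=
  X * T * (Real.exp ((i : ℝ) * L / T) - Real.exp (((i : ℝ) - 1) * L / T))

lemma rtCost_eq {T : ℝ} (hT : T ≠ 0) (X L : ℝ) (i : ℕ) :
    rtCost X T L i = X * T * Real.exp (((i : ℝ) - 1) * L / T) * (Real.exp (L / T) - 1) := by
  have h : (i : ℝ) * L / T = ((i : ℝ) - 1) * L / T + L / T := by field_simp; ring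
  rw [rtCost, h, Real.exp_add]
  ring

lemma rtCost_mono {X T L : ℝ} (hX : 0 ≤ X) (hT : 0 < T) (hL : 0 ≤ L) :
    Monotone (rtCost X T L) := by
  intro i j hij
  have hexp : 0 ≤ Real.exp (L / T) - 1 := by
    linarith [Real.one_le_exp (div_nonneg hL hT.le)]
  rw [rtCost_eq hT.ne', rtCost_eq hT.ne']
  gcongr

lemma energy_eq_sum_rtCost (X T L : ℝ) (n : ℕ) :
    X * T * (Real.exp ((n : ℝ) * L / T) - 1) = ∑ i ∈ Icc 1 n, rtCost X T L i := by
  induction n with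
  | zero => simp
  | succ n ih =>
    rw [sum_Icc_succ_top (by omega), ← ih, rtCost]
    push_cast
    rw [add_sub_cancel_right]
    ring

lemma rtOnlyObj_Icc (X T L : ℝ) (Y : ℕ → ℝ) (n : ℕ) :
    rtOnlyObj X T L Y (Icc 1 n) = ∑ i ∈ Icc 1 n, (Y i - rtCost X T L i) := by
  rw [rtOnlyObj, Nat.card_Icc, Nat.add_sub_cancel, energy_eq_sum_rtCost, sum_sub_distrib]

lemma rtOnlyObj_le_Icc_card {N : ℕ} {Y : ℕ → ℝ} (hY : AntitoneOn Y (Set.Icc 1 N))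
    (X T L : ℝ) {S : Finset ℕ} (hS : S ⊆ Icc 1 N) :
    rtOnlyObj X T L Y S ≤ rtOnlyObj X T L Y (Icc 1 #S) := by
  rw [rtOnlyObj, rtOnlyObj, Nat.card_Icc, Nat.add_sub_cancel]
  exact sub_le_sub_right (sum_le_sum_Icc_card hY hS) _

theorem rt_only_threshold_optimal_general (N : ℕ) (Y : ℕ → ℝ)
    (hsorted : ∀ i j, i ∈ Finset.Icc 1 N → j ∈ Finset.Icc 1 N → i ≤ j → Y j ≤ Y i)
    (X T L : ℝ) (hX : 0 < X) (hT : 0 < T) (hL : 0 < L) :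
    (∃ nstar ≤ N, rtOnlySet N X T L Y = Finset.Icc 1 nstar) ∧
      ∀ S ⊆ Finset.Icc 1 N, rtOnlyObj X T L Y S ≤ rtOnlyObj X T L Y (rtOnlySet N X T L Y) := by
  have hY : AntitoneOn Y (Set.Icc 1 N) := fun i hi j hj hij =>
    hsorted i j (by simpa using hi) (by simpa using hj) hij
  have hset : rtOnlySet N X T L Y = (Icc 1 N).filter (fun i => rtCost X T L i < Y i) := rfl
  obtain ⟨n, hnN, hn⟩ := exists_filter_Icc_eq_Icc (fun i => rtCost X T L i < Y i) N
    fun i j hi hij hjN hj => calc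
      rtCost X T L i ≤ rtCost X T L j := rtCost_mono hX.le hT hL.le hij
      _ < Y j := hj
      _ ≤ Y i := hY ⟨hi, hij.trans hjN⟩ ⟨hi.trans hij, hjN⟩ hij
  have hP : rtOnlySet N X T L Y = Icc 1 n := hset.trans hn
  refine ⟨⟨n, hnN, hP⟩, fun S hS => ?_⟩
  have hSN : #S ≤ N := by simpa using card_le_card hS
  calc rtOnlyObj X T L Y S ≤ rtOnlyObj X T L Y (Icc 1 #S) := rtOnlyObj_le_Icc_card hY X T L hS
    _ = ∑ i ∈ Icc 1 #S, (Y i - rtCost X T L i) := rtOnlyObj_Icc X T L Y #S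
    _ ≤ ∑ i ∈ (Icc 1 N).filter (fun i => rtCost X T L i < Y i), (Y i - rtCost X T L i) :=
        sum_le_sum_filter_of_nonneg_of_nonpos _ (Icc_subset_Icc_right hSN)
          (fun _ _ h => (sub_pos.2 h).le) fun _ _ h => sub_nonpos.2 (not_lt.1 h)
    _ = rtOnlyObj X T L Y (rtOnlySet N X T L Y) := by rw [hn, hP, rtOnlyObj_Icc]

/-- with users sorted by descending `Y`, the threshold set is a
prefix `{1, …, n*}` and maximizes the real-time-only objective. -/
theorem rt_only_threshold_optimal (N : ℕ) (hN : 1 ≤ N) (Y : ℕ → ℝ)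
    (hsorted : ∀ i j, i ∈ Finset.Icc 1 N → j ∈ Finset.Icc 1 N → i ≤ j → Y j ≤ Y i)
    (X T L : ℝ) (hX : 0 < X) (hT : 0 < T) (hL : 0 < L) :
    (∃ nstar ≤ N, rtOnlySet N X T L Y = Finset.Icc 1 nstar) ∧
      ∀ S ⊆ Finset.Icc 1 N, rtOnlyObj X T L Y S ≤ rtOnlyObj X T L Y (rtOnlySet N X T L Y) :=
  rt_only_threshold_optimal_general N Y hsorted X T L hX hT hL
end
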